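/- arXiv:1905.07713 — 3 statements merged into one kernel-verified Lean document; each statement's English description precedes it below -/
import Mathlib

section
/- Let A be the Weyl algebra W(M*, {·,·}_ε) of the representation space M = Rep(G, V) of a simply-laced quiver G with skew-symmetric weight function ε : G₁ → ℂ*, so that the Weyl generators satisfy [B̂_α^{kl}, B̂_β^{k'l'}] = ε_α^{-1}·δ_{α*,β}·δ_{k,l'}·δ_{k',l}. Fix a node i and define, for each pair of matrix indices (k,l), μ̂*_i(Λ̂^i_{kl}) := (1/2)·Σ_{α: t(α)=i} ε_α · Σ_m (B̂_α^{km} ∗ B̂_{α*}^{ml} + B̂_{α*}^{ml} ∗ B̂_α^{km}). Then the map e^i_{lk} ↦ μ̂*_i(Λ̂^i_{kl}) is a Lie algebra morphism from gl(V_i) (with commutator bracket, via the standard basis e^i_{lk}) to A with its commutator bracket; i.e. [μ̂*_i(Λ̂^i_{kl}), μ̂*_i(Λ̂^i_{k'l'})] = μ̂*_i applied to the bracket [e_{lk}, e_{l'k'}] transported by trace duality. -/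
noncomputable section

/-- The quantum comoment element μ̂*_i(Λ̂^i_{kl}) in the Weyl algebra of the
representation space of the star of the node i of a simply-laced quiver:
(1/2)·Σ_{α : t(α)=i} ε_α·Σ_m (B̂_α^{km} ∗ B̂_{α*}^{ml} + B̂_{α*}^{ml} ∗ B̂_α^{km}). -/
def quivMu {A : Type*} [Ring A] [Algebra ℂ A] {Ar : Type*} [Fintype Ar]
    {n : ℕ} {m : Ar → ℕ} (ε : Ar → ℂ)
    (Bin : (α : Ar) → Fin n → Fin (m α) → A)
    (Bout : (α : Ar) → Fin (m α) → Fin n → A) (k l : Fin n) : A :=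
  (1 / 2 : ℂ) • ∑ α, ε α • ∑ mm, (Bin α k mm * Bout α mm l + Bout α mm l * Bin α k mm)

/-- The linear extension of e^i_{lk} ↦ μ̂*_i(Λ̂^i_{kl}) (trace duality) to gl(V_i). -/
def quivPhi {A : Type*} [Ring A] [Algebra ℂ A] {Ar : Type*} [Fintype Ar]
    {n : ℕ} {m : Ar → ℕ} (ε : Ar → ℂ)
    (Bin : (α : Ar) → Fin n → Fin (m α) → A)
    (Bout : (α : Ar) → Fin (m α) → Fin n → A)
    (X : Matrix (Fin n) (Fin n) ℂ) : A :=
  ∑ k, ∑ l, X l k • quivMu ε Bin Bout k l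

/-!
Using `B̂_{α*} B̂_α = B̂_α B̂_{α*} - ε_α⁻¹ δ`, the symmetrised comoment differs from the normally
ordered one, `Σ_α ε_α (B̂_α B̂_{α*})ᵀ`, by a central multiple of the identity matrix, and such a
shift preserves the commutation relations of the matrix units of `gl`. For a single arrow the
canonical commutation relations give `[F_ij, F_kl] = ε_α⁻¹ (δ_jk F_il - δ_li F_kj)` for
`F = (B̂_α B̂_{α*})ᵀ`, so `ε_α F` satisfies the matrix-unit relations exactly; distinct arrows give
mutually commuting families, so their sum does too. Finally, any family `E` satisfying the
matrix-unit relations makes `X ↦ Σ X_ij E_ij` a morphism of Lie algebras.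
-/

open Finset

section Commutators

variable {A : Type*} [Ring A]

theorem Matrix.commute_mul_apply_mul_apply {ι ι' κ κ' : Type*} [Fintype κ] [Fintype κ']
    {a : Matrix ι κ A} {b : Matrix κ ι A} {a' : Matrix ι' κ' A} {b' : Matrix κ' ι' A}
    (haa : ∀ i p j q, Commute (a i p) (a' j q)) (hab : ∀ i p q j, Commute (a i p) (b' q j))
    (hba : ∀ p i j q, Commute (b p i) (a' j q)) (hbb : ∀ p i q j, Commute (b p i) (b' q j))
    (i j : ι) (k l : ι') : Commute ((a * b) i j) ((a' * b') k l) := by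
  simp only [Matrix.mul_apply]
  refine Commute.sum_left _ _ _ fun p _ => Commute.sum_right _ _ _ fun q _ => ?_
  exact ((haa i p k q).mul_right (hab i p q l)).mul_left
    ((hba p j k q).mul_right (hbb p j q l))

theorem ite_commute_of_central {z : A} (hz : ∀ a, Commute z a) (p : Prop) [Decidable p]
    (a : A) : Commute (if p then z else 0) a := by
  split_ifs
  exacts [hz a, Commute.zero_left a]

theorem commutator_sub_sub_of_central {x y c d : A} (hc : ∀ a, Commute c a)
    (hd : ∀ a, Commute d a) : (x - c) * (y - d) - (y - d) * (x - c) = x * y - y * x := by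
  simp only [mul_sub, sub_mul, (hc y).eq, (hd x).eq, (hc d).eq]
  abel

theorem commutator_mul_mul_of_central {x y u v : A} (hxu : Commute x u) (hyv : Commute y v)
    (hxv : ∀ a, Commute (x * v - v * x) a) (hyu : ∀ a, Commute (y * u - u * y) a) :
    x * y * (u * v) - u * v * (x * y) = (x * v - v * x) * (u * y) + (y * u - u * y) * (x * v) := by
  set c := x * v - v * x
  set d := y * u - u * y
  have hc : x * v = v * x + c := by rw [add_sub_cancel]
  have hd : y * u = u * y + d := by rw [add_sub_cancel]
  suffices x * y * (u * v) = u * v * (x * y) + c * (u * y) + d * (x * v) by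
    rw [this]; abel
  calc x * y * (u * v) = x * (y * u) * v := by noncomm_ring
    _ = x * (u * y) * v + x * d * v := by rw [hd]; noncomm_ring
    _ = x * u * (y * v) + d * x * v := by rw [(hyu x).eq]; noncomm_ring
    _ = u * (x * v) * y + d * (x * v) := by rw [hxu.eq, hyv.eq]; noncomm_ring
    _ = u * v * (x * y) + u * c * y + d * (x * v) := by rw [hc]; noncomm_ring
    _ = u * v * (x * y) + c * (u * y) + d * (x * v) := by rw [← (hxv u).eq]; noncomm_ring

theorem Matrix.commutator_mul_apply_of_canonical {ι κ : Type*} [Fintype κ] [DecidableEq ι]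
    [DecidableEq κ] {a : Matrix ι κ A} {b : Matrix κ ι A} {z : A} (hz : ∀ x, Commute z x)
    (haa : ∀ i p j q, Commute (a i p) (a j q)) (hbb : ∀ p i q j, Commute (b p i) (b q j))
    (hab : ∀ i p q j, a i p * b q j - b q j * a i p = if j = i ∧ q = p then z else 0)
    (i j k l : ι) :
    (a * b) i j * (a * b) k l - (a * b) k l * (a * b) i j
      = z * ((if l = i then (a * b) k j else 0) - if j = k then (a * b) i l else 0) := by
  have term : ∀ p q, a i p * b p j * (a k q * b q l) - a k q * b q l * (a i p * b p j)
      = (if l = i ∧ q = p then z else 0) * (a k q * b p j)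
        - (if j = k ∧ p = q then z else 0) * (a i p * b q l) := by
    intro p q
    have hba : b p j * a k q - a k q * b p j = -if j = k ∧ p = q then z else 0 := by
      rw [← hab, neg_sub]
    rw [commutator_mul_mul_of_central (haa i p k q) (hbb p j q l), hab, hba, neg_mul,
      ← sub_eq_add_neg]
    · rw [hab]; exact ite_commute_of_central hz _
    · rw [hba]; exact fun x => (ite_commute_of_central hz _ x).neg_left
  simp only [Matrix.mul_apply, sum_mul_sum]
  rw [sum_comm (f := fun q p => a k q * b q l * (a i p * b p j))]
  simp only [← sum_sub_distrib, term]
  simp only [ite_and, ite_mul, zero_mul, sum_sub_distrib, sum_ite_irrel, sum_ite_eq, sum_ite_eq',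
    mem_univ, if_true, sum_const_zero, mul_sub, mul_sum, mul_ite, mul_zero]

end Commutators

section GlRelations

variable {ι A : Type*} [DecidableEq ι] [Ring A]

/-- `E i j` stands for the image of the matrix unit `e_{ij}` of `gl_ι`. -/
def IsGlRep (E : ι → ι → A) : Prop :=
  ∀ i j k l,
    E i j * E k l - E k l * E i j = (if j = k then E i l else 0) - if l = i then E k j else 0

theorem IsGlRep.commutator_sum_smul [Fintype ι] {R : Type*} [CommRing R] [Algebra R A]
    {E : ι → ι → A} (hE : IsGlRep E) (X Y : Matrix ι ι R) :
    (∑ i, ∑ j, X i j • E i j) * (∑ k, ∑ l, Y k l • E k l)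
        - (∑ k, ∑ l, Y k l • E k l) * (∑ i, ∑ j, X i j • E i j)
      = ∑ i, ∑ j, (X * Y - Y * X) i j • E i j := by
  have expand : (∑ i, ∑ j, X i j • E i j) * (∑ k, ∑ l, Y k l • E k l)
        - (∑ k, ∑ l, Y k l • E k l) * (∑ i, ∑ j, X i j • E i j)
      = ∑ i, ∑ j, ∑ k, ∑ l, (X i j * Y k l) • (E i j * E k l - E k l * E i j) := by
    simp only [sum_mul, mul_sum, smul_mul_smul_comm, smul_sub, sum_sub_distrib]
    rw [sum_comm_cycle]
    refine congr_arg₂ _ (sum_congr rfl fun i _ => sum_comm_cycle) ?_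
    simp only [mul_comm (Y _ _)]
  rw [expand]
  simp only [hE _ _ _ _, smul_sub, smul_ite, smul_zero, sum_sub_distrib, sum_ite_irrel, sum_ite_eq,
    sum_ite_eq', mem_univ, if_true, sum_const_zero, Matrix.sub_apply, Matrix.mul_apply, sub_smul,
    sum_smul]
  congr 1
  · exact sum_congr rfl fun i _ => sum_comm
  · rw [sum_comm_cycle]
    refine sum_congr rfl fun a _ => ?_
    rw [sum_comm]
    simp only [mul_comm (X _ _)]

theorem IsGlRep.sub_ite_central {E : ι → ι → A} (hE : IsGlRep E) {z : A}
    (hz : ∀ a, Commute z a) : IsGlRep fun i j => E i j - if i = j then z else 0 := by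
  intro i j k l
  rw [commutator_sub_sub_of_central (ite_commute_of_central hz _)
    (ite_commute_of_central hz _), hE]
  split_ifs <;> subst_vars <;> simp_all [Ne.symm]

theorem IsGlRep.sum {σ : Type*} [Fintype σ] {E : σ → ι → ι → A} (hE : ∀ s, IsGlRep (E s))
    (hcomm : ∀ s t, s ≠ t → ∀ i j k l, Commute (E s i j) (E t k l)) :
    IsGlRep fun i j => ∑ s, E s i j := by
  intro i j k l
  have diagonal : ∀ s, ∑ t, (E s i j * E t k l - E t k l * E s i j)
      = E s i j * E s k l - E s k l * E s i j :=
    fun s => sum_eq_single s (fun t _ hts => sub_eq_zero.2 (hcomm s t hts.symm i j k l).eq)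
      (by simp)
  simp only [sum_mul_sum]
  rw [sum_comm (f := fun t s => E t k l * E s i j), ← sum_sub_distrib]
  simp only [← sum_sub_distrib, diagonal, hE _ i j k l]
  rw [sum_sub_distrib, sum_ite_irrel, sum_ite_irrel, sum_const_zero]

theorem isGlRep_smul_transpose_mul {κ R : Type*} [Fintype κ] [DecidableEq κ] [Field R]
    [Algebra R A] (c : R) {a : Matrix ι κ A} {b : Matrix κ ι A}
    (haa : ∀ i p j q, Commute (a i p) (a j q)) (hbb : ∀ p i q j, Commute (b p i) (b q j))
    (hab : ∀ i p q j,
      a i p * b q j - b q j * a i p = if j = i ∧ q = p then algebraMap R A c⁻¹ else 0) :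
    IsGlRep fun i j => c • (a * b) j i := by
  intro i j k l
  rw [smul_mul_smul_comm, smul_mul_smul_comm, ← smul_sub,
    Matrix.commutator_mul_apply_of_canonical (Algebra.commute_algebraMap_left _) haa hbb hab,
    ← Algebra.smul_def, smul_smul, mul_self_mul_inv]
  simp only [smul_sub, smul_ite, smul_zero, eq_comm]

end GlRelations

theorem quivMu_eq_sum_smul_mul_sub {A : Type*} [Ring A] [Algebra ℂ A] {Ar : Type*} [Fintype Ar]
    {n : ℕ} {m : Ar → ℕ} {ε : Ar → ℂ}
    {Bin : (α : Ar) → Fin n → Fin (m α) → A} {Bout : (α : Ar) → Fin (m α) → Fin n → A}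
    (hio : ∀ α (k : Fin n) (l : Fin (m α)) (k' : Fin (m α)) (l' : Fin n),
      Bin α k l * Bout α k' l' - Bout α k' l' * Bin α k l
        = if l' = k ∧ k' = l then algebraMap ℂ A (ε α)⁻¹ else 0)
    (k l : Fin n) :
    quivMu ε Bin Bout k l
      = ∑ α, ε α • (Matrix.of (Bin α) * Matrix.of (Bout α)) k l
        - if l = k then algebraMap ℂ A (∑ α, ε α * (ε α)⁻¹ * m α / 2) else 0 := by
  have symmetrize : ∀ α mm, Bin α k mm * Bout α mm l + Bout α mm l * Bin α k mm
      = (2 : ℂ) • (Bin α k mm * Bout α mm l) - if l = k then algebraMap ℂ A (ε α)⁻¹ else 0 := by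
    intro α mm
    have h := hio α k mm mm l
    simp only [and_true] at h
    rw [two_smul, ← h]
    abel
  simp only [quivMu, symmetrize, Matrix.mul_apply, Matrix.of_apply, sum_sub_distrib, smul_sub,
    smul_sum, smul_smul]
  congr 1
  · congr! 3 with α _ mm
    ring
  · split_ifs
    · simp only [sum_const, card_univ, Fintype.card_fin, ← Nat.cast_smul_eq_nsmul ℂ,
        Algebra.smul_def, ← map_mul, map_sum]
      congr! 2 with α
      ring
    · simp

/-- `Bin α` and `Bout α` are the generator matrices `B̂_α` and `B̂_{α*}` of an arrow `α` with
target `i` and of its opposite. -/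
theorem stmt9_general {A : Type*} [Ring A] [Algebra ℂ A]
    {Ar : Type*} [Fintype Ar] {n : ℕ} {m : Ar → ℕ}
    (ε : Ar → ℂ)
    (Bin : (α : Ar) → Fin n → Fin (m α) → A)
    (Bout : (α : Ar) → Fin (m α) → Fin n → A)
    (hio : ∀ α (k : Fin n) (l : Fin (m α)) (k' : Fin (m α)) (l' : Fin n),
      Bin α k l * Bout α k' l' - Bout α k' l' * Bin α k l
        = if l' = k ∧ k' = l then algebraMap ℂ A (ε α)⁻¹ else 0)
    (hio' : ∀ α β, α ≠ β → ∀ (k : Fin n) (l : Fin (m α)) (k' : Fin (m β)) (l' : Fin n),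
      Bin α k l * Bout β k' l' = Bout β k' l' * Bin α k l)
    (hii : ∀ α β (k : Fin n) (l : Fin (m α)) (k' : Fin n) (l' : Fin (m β)),
      Bin α k l * Bin β k' l' = Bin β k' l' * Bin α k l)
    (hoo : ∀ α β (k : Fin (m α)) (l : Fin n) (k' : Fin (m β)) (l' : Fin n),
      Bout α k l * Bout β k' l' = Bout β k' l' * Bout α k l) :
    ∀ X Y : Matrix (Fin n) (Fin n) ℂ,
      quivPhi ε Bin Bout (X * Y - Y * X)
        = quivPhi ε Bin Bout X * quivPhi ε Bin Bout Y
          - quivPhi ε Bin Bout Y * quivPhi ε Bin Bout X := by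
  intro X Y
  let E : Ar → Fin n → Fin n → A := fun α i j =>
    ε α • (Matrix.of (Bin α) * Matrix.of (Bout α)) j i
  have hE : ∀ α, IsGlRep (E α) := fun α =>
    isGlRep_smul_transpose_mul (ε α) (hii α α) (hoo α α) (hio α)
  have hcomm : ∀ α β, α ≠ β → ∀ i j k l, Commute (E α i j) (E β k l) :=
    fun α β hαβ i j k l => by
      have := Matrix.commute_mul_apply_mul_apply (hii α β) (hio' α β hαβ)
        (fun p i j q => (hio' β α hαβ.symm j q p i).symm) (hoo α β) j i l k
      exact (this.smul_left _).smul_right _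
  have hMu : IsGlRep fun i j => quivMu ε Bin Bout j i := by
    simpa only [quivMu_eq_sum_smul_mul_sub hio] using
      (IsGlRep.sum hE hcomm).sub_ite_central (Algebra.commute_algebraMap_left _)
  have hPhi : ∀ Z, quivPhi ε Bin Bout Z = ∑ i, ∑ j, Z i j • quivMu ε Bin Bout j i :=
    fun Z => sum_comm
  rw [hPhi, hPhi, hPhi, hMu.commutator_sum_smul]

/-- In the Weyl algebra of the representation space of a simply-laced quiver
(with generators B̂ satisfying [B̂_α^{kl}, B̂_β^{k'l'}] = ε_α⁻¹ δ_{α*β} δ_{kl'} δ_{k'l}),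
the map e^i_{lk} ↦ μ̂*_i(Λ̂^i_{kl}) is a Lie algebra morphism from gl(V_i) with the
commutator bracket to A with its commutator bracket.  Here, for a node i, Bin α is the
matrix of generators of the arrow α with target i and Bout α that of the opposite
arrow α*. -/
theorem stmt9 {A : Type*} [Ring A] [Algebra ℂ A]
    {Ar : Type*} [Fintype Ar] {n : ℕ} {m : Ar → ℕ}
    (ε : Ar → ℂ) (hε : ∀ α, ε α ≠ 0)
    (Bin : (α : Ar) → Fin n → Fin (m α) → A)
    (Bout : (α : Ar) → Fin (m α) → Fin n → A)
    (hio : ∀ α (k : Fin n) (l : Fin (m α)) (k' : Fin (m α)) (l' : Fin n),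
      Bin α k l * Bout α k' l' - Bout α k' l' * Bin α k l
        = if l' = k ∧ k' = l then algebraMap ℂ A (ε α)⁻¹ else 0)
    (hio' : ∀ α β, α ≠ β → ∀ (k : Fin n) (l : Fin (m α)) (k' : Fin (m β)) (l' : Fin n),
      Bin α k l * Bout β k' l' = Bout β k' l' * Bin α k l)
    (hii : ∀ α β (k : Fin n) (l : Fin (m α)) (k' : Fin n) (l' : Fin (m β)),
      Bin α k l * Bin β k' l' = Bin β k' l' * Bin α k l)
    (hoo : ∀ α β (k : Fin (m α)) (l : Fin n) (k' : Fin (m β)) (l' : Fin n),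
      Bout α k l * Bout β k' l' = Bout β k' l' * Bout α k l) :
    ∀ X Y : Matrix (Fin n) (Fin n) ℂ,
      quivPhi ε Bin Bout (X * Y - Y * X)
        = quivPhi ε Bin Bout X * quivPhi ε Bin Bout Y
          - quivPhi ε Bin Bout Y * quivPhi ε Bin Bout X :=
  stmt9_general ε Bin Bout hio hio' hii hoo
end
end

section
/- With the notation of the quantum comoment map for a simply-laced quiver: let i ≠ j be nodes joined by an arrow α (from i to j) with opposite α*, and define μ̂*_i(Λ̂^i_{kl}) = (ε_{α*}/2)·Σ_m (B̂_{α*}^{km} ∗ B̂_α^{ml} + B̂_α^{ml} ∗ B̂_{α*}^{km}) and μ̂*_j(Λ̂^j_{kl}) = (ε_α/2)·Σ_m (B̂_α^{km} ∗ B̂_{α*}^{ml} + B̂_{α*}^{ml} ∗ B̂_α^{km}). Then [μ̂*_i(Λ̂^i_{kl}), μ̂*_j(Λ̂^j_{k'l'})] = 0 in the Weyl algebra for all indices k, l, k', l'. -/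
private lemma mv {A : Type*} [Ring A] (e : A) (he : ∀ b, e * b = b * e)
    (g t : A) : g * (e * t) = e * (g * t) := by
  rw [← mul_assoc, ← he, mul_assoc]

private lemma mv' {A : Type*} [Ring A] (e : A) (he : ∀ b, e * b = b * e)
    (g : A) : g * e = e * g := (he g).symm

private lemma aux {A : Type*} [Ring A] (y1 x1 y2 x2 e11 e22 e12 e21 : A)
    (h11 : x1 * y1 = y1 * x1 + e11) (h22 : x2 * y2 = y2 * x2 + e22)
    (h12 : x1 * y2 = y2 * x1 + e12) (h21 : x2 * y1 = y1 * x2 + e21)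
    (hx : x2 * x1 = x1 * x2) (hy : y2 * y1 = y1 * y2)
    (c11 : ∀ b, e11 * b = b * e11) (c22 : ∀ b, e22 * b = b * e22)
    (c12 : ∀ b, e12 * b = b * e12) (c21 : ∀ b, e21 * b = b * e21) :
    (y1 * x1 + x1 * y1) * (x2 * y2 + y2 * x2) - (x2 * y2 + y2 * x2) * (y1 * x1 + x1 * y1)
      = 4 • (e12 * (y1 * x2)) - 4 • (e21 * (y2 * x1)) := by
  have h11' : ∀ t : A, x1 * (y1 * t) = y1 * (x1 * t) + e11 * t := by
    intro t; rw [← mul_assoc, h11, add_mul, mul_assoc]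
  have h22' : ∀ t : A, x2 * (y2 * t) = y2 * (x2 * t) + e22 * t := by
    intro t; rw [← mul_assoc, h22, add_mul, mul_assoc]
  have h12' : ∀ t : A, x1 * (y2 * t) = y2 * (x1 * t) + e12 * t := by
    intro t; rw [← mul_assoc, h12, add_mul, mul_assoc]
  have h21' : ∀ t : A, x2 * (y1 * t) = y1 * (x2 * t) + e21 * t := by
    intro t; rw [← mul_assoc, h21, add_mul, mul_assoc]
  have hx' : ∀ t : A, x2 * (x1 * t) = x1 * (x2 * t) := by
    intro t; rw [← mul_assoc, hx, mul_assoc]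
  have hy' : ∀ t : A, y2 * (y1 * t) = y1 * (y2 * t) := by
    intro t; rw [← mul_assoc, hy, mul_assoc]
  simp only [add_mul, mul_add, mul_assoc, h11, h22, h12, h21, h11', h22', h12', h21',
    hx, hy, hx', hy',
    mv e11 c11 y1, mv e11 c11 y2, mv e11 c11 x1, mv e11 c11 x2,
    mv e22 c22 y1, mv e22 c22 y2, mv e22 c22 x1, mv e22 c22 x2,
    mv e12 c12 y1, mv e12 c12 y2, mv e12 c12 x1, mv e12 c12 x2,
    mv e21 c21 y1, mv e21 c21 y2, mv e21 c21 x1, mv e21 c21 x2,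
    mv' e11 c11 y1, mv' e11 c11 y2, mv' e11 c11 x1, mv' e11 c11 x2,
    mv' e22 c22 y1, mv' e22 c22 y2, mv' e22 c22 x1, mv' e22 c22 x2,
    mv' e12 c12 y1, mv' e12 c12 y2, mv' e12 c12 x1, mv' e12 c12 x2,
    mv' e21 c21 y1, mv' e21 c21 y2, mv' e21 c21 x1, mv' e21 c21 x2, c11 e22]
  abel

private lemma dsum1 {M : Type*} [AddCommMonoid M] {n1 n2 : ℕ} (a : Fin n2) (b : Fin n1)
    (f : Fin n1 → Fin n2 → M) :
    ∑ m' : Fin n1, ∑ m : Fin n2, (if a = m ∧ m' = b then f m' m else 0) = f b a := by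
  simp [ite_and, Finset.sum_ite_eq, Finset.sum_ite_eq']

private lemma dsum2 {M : Type*} [AddCommMonoid M] {n1 n2 : ℕ} (a : Fin n2) (b : Fin n1)
    (f : Fin n1 → Fin n2 → M) :
    ∑ m' : Fin n1, ∑ m : Fin n2, (if m = a ∧ b = m' then f m' m else 0) = f b a := by
  simp [ite_and, Finset.sum_ite_eq, Finset.sum_ite_eq']

/-- For two nodes i ≠ j joined by a single arrow α : i → j (with opposite α*), the
components μ̂*_i(Λ̂^i_{kl}) = (ε_{α*}/2)·Σ_m (B̂_{α*}^{km} ∗ B̂_α^{ml} + B̂_α^{ml} ∗ B̂_{α*}^{km})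
and μ̂*_j(Λ̂^j_{kl}) = (ε_α/2)·Σ_m (B̂_α^{km} ∗ B̂_{α*}^{ml} + B̂_{α*}^{ml} ∗ B̂_α^{km})
of the quantum comoment map commute in the Weyl algebra.  Here X = B̂_α (an n_j × n_i
matrix of generators), Y = B̂_{α*} (n_i × n_j), ε = ε_α and ε_{α*} = -ε. -/
theorem stmt10 {A : Type*} [Ring A] [Algebra ℂ A] (ni nj : ℕ)
    (ε : ℂ) (hε : ε ≠ 0)
    (X : Fin nj → Fin ni → A) (Y : Fin ni → Fin nj → A)
    (hXY : ∀ (k : Fin nj) (l : Fin ni) (k' : Fin ni) (l' : Fin nj),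
      X k l * Y k' l' - Y k' l' * X k l
        = if l' = k ∧ k' = l then algebraMap ℂ A ε⁻¹ else 0)
    (hXX : ∀ k l k' l', X k l * X k' l' = X k' l' * X k l)
    (hYY : ∀ k l k' l', Y k l * Y k' l' = Y k' l' * Y k l) :
    ∀ (k l : Fin ni) (k' l' : Fin nj),
      ((-ε / 2) • ∑ mm, (Y k mm * X mm l + X mm l * Y k mm)) *
        ((ε / 2) • ∑ mm, (X k' mm * Y mm l' + Y mm l' * X k' mm))
      = ((ε / 2) • ∑ mm, (X k' mm * Y mm l' + Y mm l' * X k' mm)) *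
        ((-ε / 2) • ∑ mm, (Y k mm * X mm l + X mm l * Y k mm)) := by
  intro k l k' l'
  set C : A := algebraMap ℂ A ε⁻¹ with hCdef
  have hcen : ∀ b : A, C * b = b * C := fun b => Algebra.commutes ε⁻¹ b
  have cif : ∀ (p : Prop) [Decidable p], ∀ b : A,
      (if p then C else 0) * b = b * (if p then C else 0) := by
    intro p _ b
    split
    · exact hcen b
    · rw [zero_mul, mul_zero]
  have swap : ∀ (a : Fin nj) (b : Fin ni) (c : Fin ni) (d : Fin nj),
      X a b * Y c d = Y c d * X a b + (if d = a ∧ c = b then C else 0) := by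
    intro a b c d
    have h := hXY a b c d
    rw [sub_eq_iff_eq_add] at h
    exact h.trans (add_comm _ _)
  have key : ∀ (m : Fin nj) (m' : Fin ni),
      (Y k m * X m l + X m l * Y k m) * (X k' m' * Y m' l' + Y m' l' * X k' m')
        - (X k' m' * Y m' l' + Y m' l' * X k' m') * (Y k m * X m l + X m l * Y k m)
      = 4 • ((if l' = m ∧ m' = l then C else 0) * (Y k m * X k' m'))
        - 4 • ((if m = k' ∧ k = m' then C else 0) * (Y m' l' * X m l)) := by
    intro m m'
    exact aux (Y k m) (X m l) (Y m' l') (X k' m') _ _ _ _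
      (swap m l k m) (swap k' m' m' l') (swap m l m' l') (swap k' m' k m)
      (hXX k' m' m l) (hYY m' l' k m)
      (cif _) (cif _) (cif _) (cif _)
  have main : (∑ mm, (Y k mm * X mm l + X mm l * Y k mm)) *
        (∑ mm, (X k' mm * Y mm l' + Y mm l' * X k' mm))
      = (∑ mm, (X k' mm * Y mm l' + Y mm l' * X k' mm)) *
        (∑ mm, (Y k mm * X mm l + X mm l * Y k mm)) := by
    rw [Finset.sum_mul_sum, Finset.sum_mul_sum, Finset.sum_comm, ← sub_eq_zero,
      ← Finset.sum_sub_distrib]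
    simp only [← Finset.sum_sub_distrib, key]
    simp only [Finset.sum_sub_distrib]
    have h1 : ∑ m' : Fin ni, ∑ m : Fin nj,
        (4 • ((if l' = m ∧ m' = l then C else 0) * (Y k m * X k' m')))
        = 4 • (C * (Y k l' * X k' l)) := by
      have := dsum1 l' l (fun m' m => (4 : ℕ) • (C * (Y k m * X k' m')))
      rw [← this]
      congr 1; funext m'; congr 1; funext m
      split
      · rfl
      · rw [zero_mul, smul_zero]
    have h2 : ∑ m' : Fin ni, ∑ m : Fin nj,
        (4 • ((if m = k' ∧ k = m' then C else 0) * (Y m' l' * X m l)))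
        = 4 • (C * (Y k l' * X k' l)) := by
      have := dsum2 k' k (fun m' m => (4 : ℕ) • (C * (Y m' l' * X m l)))
      rw [← this]
      congr 1; funext m'; congr 1; funext m
      split
      · rfl
      · rw [zero_mul, smul_zero]
    rw [h1, h2, sub_self]
  rw [smul_mul_assoc, mul_smul_comm, smul_mul_assoc, mul_smul_comm, main, smul_comm]
end

section
/- In the Weyl algebra A of the representation space of a simply-laced quiver, the commutator of the quantum comoment with a generator is: [μ̂*_i(Λ̂^i_{kl}), B̂_α^{qr}] = -δ_{ql}·B̂_α^{kr} and [μ̂*_i(Λ̂^i_{kl}), B̂_{α*}^{qr}] = δ_{kr}·B̂_{α*}^{ql}, for any arrow α with t(α) = i. Consequently μ̂* is a quantum comoment map for the base-changing action: [μ̂*(Λ), X̂] equals the infinitesimal conjugation action of the trace-dual of Λ on X̂. -/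
noncomputable section

/-! Each Weyl generator commutes with every generator except its partners, and those brackets
are the central scalars `ε_α⁻¹`. So in `⁅a * b + b * a, x⁆` only the non-commuting factor
contributes, the anticommutator with the central scalar doubles it, and the prefactor `(1/2) ε_α`
of `μ̂*` cancels the resulting `2 ε_α⁻¹`. The statements for `quivPhi` then follow by linearity. -/

section Comoment

attribute [local instance] LieRing.ofAssociativeRing

lemma lie_add_mul_of_commute_left {R : Type*} [Ring R] {a c : R} (b : R) (h : Commute a c) :
    ⁅a * b + b * a, c⁆ = a * ⁅b, c⁆ + ⁅b, c⁆ * a := by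
  have leibniz : ∀ x y : R, ⁅x * y, c⁆ = x * ⁅y, c⁆ + ⁅x, c⁆ * y := fun x y => by
    simp only [Ring.lie_def]; noncomm_ring
  rw [add_lie, leibniz, leibniz, h.lie_eq, zero_mul, mul_zero]
  abel

lemma smul_anticomm_algebraMap_inv {A : Type*} [Ring A] [Algebra ℂ A] {z : ℂ} (hz : z ≠ 0)
    (a : A) : (1 / 2 : ℂ) • z • (a * algebraMap ℂ A z⁻¹ + algebraMap ℂ A z⁻¹ * a) = a := by
  rw [← Algebra.commutes, ← two_mul, ← Algebra.smul_def, two_mul, ← add_smul, smul_smul,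
    smul_smul, show (1 / 2 : ℂ) * z * (z⁻¹ + z⁻¹) = 1 by field_simp; ring, one_smul]

variable {A : Type*} [Ring A] [Algebra ℂ A] {Ar : Type*} [Fintype Ar] {n : ℕ} {m : Ar → ℕ}
  {ε : Ar → ℂ} {Bin : (α : Ar) → Fin n → Fin (m α) → A}
  {Bout : (α : Ar) → Fin (m α) → Fin n → A}

lemma lie_quivMu (k l : Fin n) (x : A) :
    ⁅quivMu ε Bin Bout k l, x⁆ = (1 / 2 : ℂ) • ∑ β, ε β •
      ∑ j, ⁅Bin β k j * Bout β j l + Bout β j l * Bin β k j, x⁆ := by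
  simp only [quivMu, smul_lie, sum_lie]

lemma lie_quivMu_bin (hε : ∀ α, ε α ≠ 0)
    (hio : ∀ α (k : Fin n) (l : Fin (m α)) (k' : Fin (m α)) (l' : Fin n),
      ⁅Bin α k l, Bout α k' l'⁆ = if l' = k ∧ k' = l then algebraMap ℂ A (ε α)⁻¹ else 0)
    (hio' : ∀ α β, α ≠ β → ∀ (k : Fin n) (l : Fin (m α)) (k' : Fin (m β)) (l' : Fin n),
      Commute (Bin α k l) (Bout β k' l'))
    (hii : ∀ α β (k : Fin n) (l : Fin (m α)) (k' : Fin n) (l' : Fin (m β)),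
      Commute (Bin α k l) (Bin β k' l'))
    (k l : Fin n) (α : Ar) (q : Fin n) (r : Fin (m α)) :
    ⁅quivMu ε Bin Bout k l, Bin α q r⁆ = if q = l then -Bin α k r else 0 := by
  have pair_lie : ∀ β j, ⁅Bin β k j * Bout β j l + Bout β j l * Bin β k j, Bin α q r⁆
      = Bin β k j * ⁅Bout β j l, Bin α q r⁆ + ⁅Bout β j l, Bin α q r⁆ * Bin β k j :=
    fun β j => lie_add_mul_of_commute_left _ (hii β α k j q r)
  have other_arrow : ∀ β ≠ α, ∀ j, ⁅Bout β j l, Bin α q r⁆ = 0 :=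
    fun β hβ j => (hio' α β hβ.symm q r j l).symm.lie_eq
  have same_arrow : ∀ j, ⁅Bout α j l, Bin α q r⁆
      = -if l = q ∧ j = r then algebraMap ℂ A (ε α)⁻¹ else 0 := by
    intro j
    rw [← lie_skew, hio]
  rw [lie_quivMu, Finset.sum_eq_single α (fun β _ hβ => by simp [pair_lie, other_arrow β hβ])
    (by simp)]
  simp only [pair_lie, same_arrow]
  split_ifs with hq
  · subst hq
    rw [Finset.sum_eq_single r (fun j _ hj => by simp [hj]) (by simp)]
    simp only [and_self, if_true, mul_neg, neg_mul, ← neg_add, smul_neg,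
      smul_anticomm_algebraMap_inv (hε α)]
  · simp [Ne.symm hq]

lemma lie_quivMu_bout (hε : ∀ α, ε α ≠ 0)
    (hio : ∀ α (k : Fin n) (l : Fin (m α)) (k' : Fin (m α)) (l' : Fin n),
      ⁅Bin α k l, Bout α k' l'⁆ = if l' = k ∧ k' = l then algebraMap ℂ A (ε α)⁻¹ else 0)
    (hio' : ∀ α β, α ≠ β → ∀ (k : Fin n) (l : Fin (m α)) (k' : Fin (m β)) (l' : Fin n),
      Commute (Bin α k l) (Bout β k' l'))
    (hoo : ∀ α β (k : Fin (m α)) (l : Fin n) (k' : Fin (m β)) (l' : Fin n),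
      Commute (Bout α k l) (Bout β k' l'))
    (k l : Fin n) (α : Ar) (q : Fin (m α)) (r : Fin n) :
    ⁅quivMu ε Bin Bout k l, Bout α q r⁆ = if r = k then Bout α q l else 0 := by
  have pair_lie : ∀ β j, ⁅Bin β k j * Bout β j l + Bout β j l * Bin β k j, Bout α q r⁆
      = Bout β j l * ⁅Bin β k j, Bout α q r⁆ + ⁅Bin β k j, Bout α q r⁆ * Bout β j l := by
    intro β j
    rw [add_comm]
    exact lie_add_mul_of_commute_left _ (hoo β α j l q r)
  have other_arrow : ∀ β ≠ α, ∀ j, ⁅Bin β k j, Bout α q r⁆ = 0 :=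
    fun β hβ j => (hio' β α hβ k j q r).lie_eq
  rw [lie_quivMu, Finset.sum_eq_single α (fun β _ hβ => by simp [pair_lie, other_arrow β hβ])
    (by simp)]
  simp only [pair_lie, hio]
  split_ifs with hr
  · subst hr
    rw [Finset.sum_eq_single q (fun j _ hj => by simp [Ne.symm hj]) (by simp)]
    simp only [and_self, if_true, smul_anticomm_algebraMap_inv (hε α)]
  · simp [hr]

lemma lie_quivPhi (X : Matrix (Fin n) (Fin n) ℂ) (x : A) :
    ⁅quivPhi ε Bin Bout X, x⁆ = ∑ k, ∑ l, X l k • ⁅quivMu ε Bin Bout k l, x⁆ := by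
  simp only [quivPhi, smul_lie, sum_lie]

lemma lie_quivPhi_of_lie_quivMu_eq_neg {x : A} {y : Fin n → A} {q : Fin n}
    (h : ∀ k l, ⁅quivMu ε Bin Bout k l, x⁆ = if q = l then -y k else 0)
    (X : Matrix (Fin n) (Fin n) ℂ) :
    ⁅quivPhi ε Bin Bout X, x⁆ = -∑ k, X q k • y k := by
  simp [lie_quivPhi, h]

lemma lie_quivPhi_of_lie_quivMu_eq {x : A} {y : Fin n → A} {r : Fin n}
    (h : ∀ k l, ⁅quivMu ε Bin Bout k l, x⁆ = if r = k then y l else 0)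
    (X : Matrix (Fin n) (Fin n) ℂ) :
    ⁅quivPhi ε Bin Bout X, x⁆ = ∑ k, X k r • y k := by
  rw [lie_quivPhi, Finset.sum_comm]
  simp [h]

end Comoment

/-- Commutators of the quantum comoment with the Weyl generators:
[μ̂*_i(Λ̂^i_{kl}), B̂_α^{qr}] = -δ_{ql}·B̂_α^{kr} and
[μ̂*_i(Λ̂^i_{kl}), B̂_{α*}^{qr}] = δ_{kr}·B̂_{α*}^{ql} for any arrow α with t(α) = i;
consequently [μ̂*(Λ), X̂] is the infinitesimal conjugation action of the trace-dual
of Λ on the matrices of generators. -/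
theorem stmt11 {A : Type*} [Ring A] [Algebra ℂ A]
    {Ar : Type*} [Fintype Ar] {n : ℕ} {m : Ar → ℕ}
    (ε : Ar → ℂ) (hε : ∀ α, ε α ≠ 0)
    (Bin : (α : Ar) → Fin n → Fin (m α) → A)
    (Bout : (α : Ar) → Fin (m α) → Fin n → A)
    (hio : ∀ α (k : Fin n) (l : Fin (m α)) (k' : Fin (m α)) (l' : Fin n),
      Bin α k l * Bout α k' l' - Bout α k' l' * Bin α k l
        = if l' = k ∧ k' = l then algebraMap ℂ A (ε α)⁻¹ else 0)
    (hio' : ∀ α β, α ≠ β → ∀ (k : Fin n) (l : Fin (m α)) (k' : Fin (m β)) (l' : Fin n),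
      Bin α k l * Bout β k' l' = Bout β k' l' * Bin α k l)
    (hii : ∀ α β (k : Fin n) (l : Fin (m α)) (k' : Fin n) (l' : Fin (m β)),
      Bin α k l * Bin β k' l' = Bin β k' l' * Bin α k l)
    (hoo : ∀ α β (k : Fin (m α)) (l : Fin n) (k' : Fin (m β)) (l' : Fin n),
      Bout α k l * Bout β k' l' = Bout β k' l' * Bout α k l) :
    (∀ (k l : Fin n) (α : Ar) (q : Fin n) (r : Fin (m α)),
      quivMu ε Bin Bout k l * Bin α q r - Bin α q r * quivMu ε Bin Bout k l
        = if q = l then -Bin α k r else 0) ∧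
    (∀ (k l : Fin n) (α : Ar) (q : Fin (m α)) (r : Fin n),
      quivMu ε Bin Bout k l * Bout α q r - Bout α q r * quivMu ε Bin Bout k l
        = if r = k then Bout α q l else 0) ∧
    (∀ (X : Matrix (Fin n) (Fin n) ℂ) (α : Ar) (q : Fin n) (r : Fin (m α)),
      quivPhi ε Bin Bout X * Bin α q r - Bin α q r * quivPhi ε Bin Bout X
        = -∑ k, X q k • Bin α k r) ∧
    (∀ (X : Matrix (Fin n) (Fin n) ℂ) (α : Ar) (q : Fin (m α)) (r : Fin n),
      quivPhi ε Bin Bout X * Bout α q r - Bout α q r * quivPhi ε Bin Bout X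
        = ∑ k, X k r • Bout α q k) := by
  have hin := lie_quivMu_bin hε hio hio' hii
  have hout := lie_quivMu_bout hε hio hio' hoo
  exact ⟨hin, hout, fun X α q r => lie_quivPhi_of_lie_quivMu_eq_neg (hin · · α q r) X,
    fun X α q r => lie_quivPhi_of_lie_quivMu_eq (hout · · α q r) X⟩
end
end
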